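/- arXiv:math/0304463 — 7 statements merged into one kernel-verified Lean document; each statement's English description precedes it below -/
import Mathlib

section
/- Let q = p^n with p prime and let f(X) = X^q + g(X) ∈ GF(q)[X] be fully reducible, where deg g < q − 1. Then either f is a polynomial in X^p (i.e., f lies in GF(q)[X^p]), or g(X) = −X, or deg g ≥ (q+1)/2. -/
open Polynomial

/-- Rédei, 1970: if `f(X) = X^q + g(X)` with `deg g < q - 1` is fully reducible over
`GF(q)`, `q = p^n`, then `f ∈ GF(q)[X^p]`, or `g = -X`, or `deg g ≥ (q+1)/2`. -/
theorem redei_lacunary (p n : ℕ) (hp : p.Prime) (hn : 0 < n)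
    (F : Type) [Field F] [Fintype F] (hF : Fintype.card F = p ^ n)
    (g : F[X]) (hdeg : g.natDegree < p ^ n - 1)
    (f : F[X]) (hf : f = X ^ (p ^ n) + g)
    (hsplit : f.Splits) :
    (∃ u : F[X], f = u.comp (X ^ p)) ∨ g = -X ∨ 2 * g.natDegree ≥ p ^ n + 1 := by
  classical
  set q := p ^ n with hq
  have hq2 : 2 ≤ q := (Nat.one_lt_pow hn.ne' hp.one_lt)
  -- characteristic
  have hchar : CharP F p := by
    have h1 : CharP F (ringChar F) := ringChar.charP F
    have h2 : (ringChar F).Prime := CharP.char_is_prime F (ringChar F)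
    obtain ⟨m, hm⟩ := FiniteField.card F (ringChar F)
    have : p = ringChar F := by
      have : p ∣ ringChar F ^ (m : ℕ) := by
        rw [← hm.2, hF]; exact dvd_pow_self p hn.ne'
      exact ((Nat.prime_dvd_prime_iff_eq hp h2).1 (hp.dvd_of_dvd_pow this))
    rwa [this]
  -- f is monic of degree q
  have hgdeg : g.degree < (q : ℕ) := by
    rcases eq_or_ne g 0 with h | h
    · rw [h, degree_zero]; exact WithBot.bot_lt_coe q
    · rw [degree_eq_natDegree h]; exact_mod_cast lt_of_lt_of_le hdeg (Nat.sub_le _ _)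
  have hmonic : f.Monic := by
    rw [hf]; exact monic_X_pow_add hgdeg
  have hfdeg : f.natDegree = q := by
    rw [hf, natDegree_add_eq_left_of_natDegree_lt, natDegree_X_pow]
    rw [natDegree_X_pow]
    exact lt_of_lt_of_le hdeg (Nat.sub_le _ _)
  have hf0 : f ≠ 0 := hmonic.ne_zero
  -- derivative of f is derivative of g
  have hqF : ((q : ℕ) : F) = 0 := by
    rw [hq, Nat.cast_pow, CharP.cast_eq_zero F p, zero_pow hn.ne']
  have hder : derivative f = derivative g := by
    rw [hf, derivative_add, derivative_X_pow, hqF, map_zero, zero_mul, zero_add]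
  by_cases hg' : derivative g = 0
  · -- f ∈ F[X^p]
    left
    refine ⟨contract p f, ?_⟩
    rw [← expand_eq_comp_X_pow]
    haveI := Fact.mk hp
    exact (Polynomial.expand_contract p (by rw [hder, hg']) hp.ne_zero).symm
  by_cases hX : g + X = 0
  · exact Or.inr (Or.inl (by linear_combination (norm := ring_nf) hX))
  right; right
  -- decomposition f = s * m
  set T := f.roots.toFinset with hT
  set s := ∏ a ∈ T, (X - C a) with hs
  set m := ∏ a ∈ T, (X - C a) ^ (f.rootMultiplicity a - 1) with hm
  have hsm : f = s * m := by
    have h1 : f = (f.roots.map fun a => X - C a).prod :=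
      hsplit.eq_prod_roots_of_monic hmonic
    rw [h1, prod_multiset_root_eq_finset_root, hs, hm, ← Finset.prod_mul_distrib]
    apply Finset.prod_congr rfl
    intro a ha
    have h2 : 1 ≤ f.rootMultiplicity a := by
      rw [← count_roots]
      exact Multiset.one_le_count_iff_mem.2 (Multiset.mem_toFinset.1 ha)
    rw [← pow_succ']
    congr 1
    omega
  -- s divides g + X
  have hsdvd : s ∣ g + X := by
    have h1 : s ∣ X ^ q - X := by
      have h2 : ((X ^ q - X : F[X]).roots.map fun a => X - C a).prod ∣ X ^ q - X :=
        prod_multiset_X_sub_C_dvd _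
      have h4 : (X ^ q - X : F[X]).roots = Finset.univ.val := by
        rw [← hF]; exact FiniteField.roots_X_pow_card_sub_X F
      rw [h4] at h2
      refine dvd_trans ?_ h2
      have : (Finset.univ.val.map fun a : F => X - C a).prod = ∏ a : F, (X - C a) := rfl
      rw [this]
      exact Finset.prod_dvd_prod_of_subset T Finset.univ _ (Finset.subset_univ T)
    have h3 : s ∣ f := ⟨m, hsm⟩
    have := dvd_sub h3 h1
    rwa [hf, add_sub_sub_cancel] at this
  -- m divides derivative g
  have hmdvd : m ∣ derivative g := by
    rw [← hder, hm]
    refine Finset.prod_dvd_of_coprime ?_ ?_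
    · intro a _ b _ hab
      exact (pairwise_coprime_X_sub_C Function.injective_id hab).pow
    · intro a _
      exact pow_sub_one_dvd_derivative_of_pow_dvd (pow_rootMultiplicity_dvd f a)
  -- degree counting
  have hsmono : s.Monic := monic_prod_of_monic _ _ fun a _ => monic_X_sub_C a
  have hmmono : m.Monic := monic_prod_of_monic _ _ fun a _ => (monic_X_sub_C a).pow _
  have hgn : 1 ≤ g.natDegree := by
    by_contra h
    push_neg at h
    have : g = C (g.coeff 0) := eq_C_of_natDegree_eq_zero (by omega)
    rw [this, derivative_C] at hg'
    exact hg' rfl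
  have hds : s.natDegree ≤ g.natDegree := by
    refine le_trans (natDegree_le_of_dvd hsdvd hX) ?_
    refine le_trans (natDegree_add_le g X) ?_
    simp [natDegree_X, hgn]
  have hdm : m.natDegree ≤ g.natDegree - 1 := by
    have h1 : m.natDegree ≤ (derivative g).natDegree := natDegree_le_of_dvd hmdvd hg'
    have h2 : (derivative g).natDegree < g.natDegree := natDegree_derivative_lt (by omega)
    omega
  have htotal : q = s.natDegree + m.natDegree := by
    rw [← hfdeg, hsm, hsmono.natDegree_mul hmmono]
  omega
end

section
/- Let q = p^n with p prime and let f(X) = X^q + g(X) ∈ GF(q)[X] be fully reducible, where deg g < q. Then f(X) divides (X + g(X))·g'(X) in GF(q)[X], where g' denotes the formal derivative of g. -/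
open Polynomial

/-- If `q = p^n` with `p` prime and `f(X) = X^q + g(X)` with `deg g < q` is fully
reducible over `GF(q)`, then `f` divides `(X + g)·g'`. -/
theorem redei_lacunary_divides (p n : ℕ) (hp : p.Prime) (hn : 0 < n)
    (F : Type) [Field F] [Fintype F] (hF : Fintype.card F = p ^ n)
    (g : F[X]) (hdeg : g.natDegree < p ^ n)
    (f : F[X]) (hf : f = X ^ (p ^ n) + g)
    (hsplit : (f.map (RingHom.id F)).Splits) :
    f ∣ (X + g) * derivative g := by
  classical
  have hq : 0 < p ^ n := pow_pos hp.pos n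
  have hmono : f.Monic := by
    rw [hf]
    exact monic_X_pow_add (by
      rcases eq_or_ne g 0 with rfl | hg
      · rw [degree_zero]; exact WithBot.bot_lt_coe _
      · exact (degree_eq_natDegree hg) ▸ (by exact_mod_cast hdeg))
  -- derivative of f equals derivative of g
  have hcast : ((p ^ n : ℕ) : F) = 0 := by
    rw [← hF]; exact FiniteField.cast_card_eq_zero F
  have hder : derivative f = derivative g := by
    rw [hf, derivative_add, derivative_X_pow, hcast]
    simp
  -- f = product over roots
  have hprod := Splits.eq_prod_roots_of_monic (by rwa [map_id] at hsplit) hmono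
  rw [hprod, Finset.prod_multiset_map_count]
  refine Finset.prod_dvd_of_coprime (fun a ha b hb hab => ?_) (fun a ha => ?_)
  · exact (pairwise_coprime_X_sub_C Function.injective_id hab).pow
  · -- a is a root of f
    have haroot : f.IsRoot a := by
      rw [Multiset.mem_toFinset] at ha
      exact isRoot_of_mem_roots ha
    have ha1 : 1 ≤ f.roots.count a := by
      rw [Multiset.one_le_count_iff_mem, Multiset.mem_toFinset] at *
      exact ha
    -- a^q = a
    have hpow : a ^ (p ^ n) = a := by rw [← hF]; exact FiniteField.pow_card a
    have hg : g.eval a = -a := by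
      have := haroot
      rw [hf] at this
      simp only [IsRoot, eval_add, eval_pow, eval_X, hpow] at this
      linear_combination this
    have h1 : (X - C a) ∣ (X + g) := by
      apply dvd_iff_isRoot.mpr
      simp [IsRoot, hg]
    have h2 : (X - C a) ^ (f.roots.count a - 1) ∣ derivative g := by
      rw [← hder]
      exact pow_sub_one_dvd_derivative_of_pow_dvd (by
        rw [count_roots]
        exact f.pow_rootMultiplicity_dvd a)
    calc (X - C a) ^ f.roots.count a
        = (X - C a) * (X - C a) ^ (f.roots.count a - 1) := by
          rw [← pow_succ', Nat.sub_add_cancel ha1]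
      _ ∣ (X + g) * derivative g := mul_dvd_mul h1 h2
end

section
/- Let p be a prime and let f(X) = X^p + g(X) ∈ GF(p)[X] be fully reducible, where deg g < p − 1. Then either g is a constant polynomial, or g(X) = −X, or deg g ≥ (p+1)/2. -/
open Polynomial

lemma sum_count_le_card {α : Type*} [DecidableEq α] (s : Finset α) (M : Multiset α) :
    ∑ a ∈ s, M.count a ≤ Multiset.card M := by
  have h1 : ∑ a ∈ s, M.count a ≤ ∑ a ∈ s ∪ M.toFinset, M.count a :=
    Finset.sum_le_sum_of_subset Finset.subset_union_left
  have h2 : ∑ a ∈ s ∪ M.toFinset, M.count a = ∑ a ∈ M.toFinset, M.count a := by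
    refine (Finset.sum_subset Finset.subset_union_right ?_).symm
    intro x _ hx
    exact Multiset.count_eq_zero.2 (fun h => hx (Multiset.mem_toFinset.2 h))
  rw [h2, Multiset.toFinset_sum_count_eq] at h1
  exact h1

/-- If `p` is prime and `f(X) = X^p + g(X)` with `deg g < p - 1` is fully reducible over
`GF(p)`, then `g` is constant, or `g = -X`, or `deg g ≥ (p+1)/2`. -/
theorem redei_lacunary_prime (p : ℕ) (hp : p.Prime)
    (F : Type) [Field F] [Fintype F] (hF : Fintype.card F = p)
    (g : F[X]) (hdeg : g.natDegree < p - 1)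
    (f : F[X]) (hf : f = X ^ p + g)
    (hsplit : (f.map (RingHom.id F)).Splits) :
    (∃ c : F, g = C c) ∨ g = -X ∨ 2 * g.natDegree ≥ p + 1 := by
  by_cases hg0 : g.natDegree = 0
  · exact Or.inl ⟨g.coeff 0, g.eq_C_of_natDegree_eq_zero hg0⟩
  by_cases hgx : g = -X
  · exact Or.inr (Or.inl hgx)
  right; right
  classical
  haveI := Fact.mk hp
  haveI : CharP F p := charP_of_card_eq_prime hF
  have hp2 := hp.two_le
  set d := g.natDegree with hd
  have hd1 : 1 ≤ d := Nat.one_le_iff_ne_zero.2 hg0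
  have hdp : d < p := lt_of_lt_of_le hdeg (Nat.sub_le _ _)
  have hgne : g ≠ 0 := fun h => hg0 (by simp [hd, h])
  -- degree of f
  have hdegg : g.degree < (X ^ p : F[X]).degree := by
    rw [degree_X_pow]
    exact lt_of_le_of_lt degree_le_natDegree (by exact_mod_cast hdp)
  have hfdeg : f.natDegree = p := by
    rw [hf, natDegree_add_eq_left_of_degree_lt hdegg, natDegree_X_pow]
  have hfroots : Multiset.card f.roots = p := by
    rw [map_id] at hsplit
    rw [splits_iff_card_roots.mp hsplit, hfdeg]
  -- the auxiliary polynomial h = X + g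
  set h : F[X] := X + g with hh
  have hh0 : h ≠ 0 := by
    intro h0
    exact hgx (by rw [eq_neg_of_add_eq_zero_right h0])
  have hf0 : f ≠ 0 := by
    intro h0
    rw [h0, natDegree_zero] at hfdeg
    omega
  -- every root of f is a root of h
  have hsub : f.roots.toFinset ⊆ h.roots.toFinset := by
    intro a ha
    rw [Multiset.mem_toFinset, mem_roots hf0] at ha
    rw [Multiset.mem_toFinset, mem_roots hh0]
    have hap : a ^ p = a := by
      have := FiniteField.pow_card a
      rwa [hF] at this
    have : f.eval a = 0 := ha
    rw [hf] at this
    simp only [eval_add, eval_pow, eval_X, hap] at this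
    simpa [hh, IsRoot] using this
  -- derivative of f equals derivative of g
  have hder : derivative f = derivative g := by
    rw [hf, derivative_add, derivative_X_pow]
    have : ((p : ℕ) : F) = 0 := CharP.cast_eq_zero F p
    simp [this]
  -- derivative of g is nonzero
  have hg' : derivative g ≠ 0 := by
    intro h0
    have hc : (derivative g).coeff (d - 1) = 0 := by rw [h0]; simp
    rw [coeff_derivative] at hc
    have hdd : d - 1 + 1 = d := Nat.succ_pred_eq_of_pos hd1
    rw [hdd] at hc
    have hlc : g.coeff d ≠ 0 := by
      rw [hd]
      exact leadingCoeff_ne_zero.2 hgne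
    have hcast : ((d - 1 : ℕ) : F) + 1 ≠ 0 := by
      have : (((d - 1 : ℕ) : F) + 1) = ((d : ℕ) : F) := by
        rw [Nat.cast_sub hd1]
        push_cast
        ring
      rw [this]
      rw [Ne, CharP.cast_eq_zero_iff F p d]
      intro hdvd
      exact absurd (Nat.le_of_dvd (by omega) hdvd) (by omega)
    exact hcast (by
      rcases mul_eq_zero.1 hc with h1 | h2
      · exact absurd h1 hlc
      · exact h2)
  set s := f.roots.toFinset with hs
  -- distinct-roots bound
  have hr : s.card ≤ d := by
    calc s.card ≤ h.roots.toFinset.card := Finset.card_le_card hsub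
      _ ≤ Multiset.card h.roots := Multiset.toFinset_card_le _
      _ ≤ h.natDegree := card_roots' h
      _ ≤ max (X : F[X]).natDegree d := natDegree_add_le _ _
      _ = max 1 d := by rw [natDegree_X]
      _ = d := max_eq_right hd1
  -- multiplicity bound
  have hm : ∑ a ∈ s, (f.roots.count a - 1) ≤ d - 1 := by
    calc ∑ a ∈ s, (f.roots.count a - 1)
        ≤ ∑ a ∈ s, (derivative g).roots.count a := by
          apply Finset.sum_le_sum
          intro a _
          rw [count_roots, count_roots, ← hder]
          exact rootMultiplicity_sub_one_le_derivative_rootMultiplicity_of_ne_zero f a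
            (by rwa [hder])
      _ ≤ Multiset.card (derivative g).roots := sum_count_le_card _ _
      _ ≤ (derivative g).natDegree := card_roots' _
      _ ≤ d - 1 := natDegree_derivative_le g
  -- put it together
  have hcount1 : ∀ a ∈ s, 1 ≤ f.roots.count a := fun a ha =>
    Multiset.one_le_count_iff_mem.2 (Multiset.mem_toFinset.1 ha)
  have key : p = ∑ a ∈ s, f.roots.count a := by
    rw [← hfroots, hs, Multiset.toFinset_sum_count_eq]
  have hsplit2 : ∑ a ∈ s, f.roots.count a = s.card + ∑ a ∈ s, (f.roots.count a - 1) := by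
    rw [Finset.card_eq_sum_ones, ← Finset.sum_add_distrib]
    exact Finset.sum_congr rfl fun a ha => by
      have := hcount1 a ha; omega
  have : p ≤ d + (d - 1) := by
    rw [key, hsplit2]
    exact add_le_add hr hm
  omega
end

section
/- Let B be a (k,n)-arc in a finite projective plane of order q, with n ≥ 1. Then k ≤ (n−1)(q+1) + 1. Moreover, if k = (n−1)(q+1) + 1 and n ≤ q, then n divides q and every line of the plane meets B in exactly 0 or exactly n points. -/
open Configuration

/-- Barlotti's bound: a `(k,n)`-arc in a projective plane of order `q` has
`k ≤ (n-1)(q+1)+1`, and in case of equality (with `n ≤ q`) `n` divides `q` and every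
line meets the arc in `0` or `n` points. -/
theorem barlotti_arc_bound (P L : Type) [Membership P L] [ProjectivePlane P L]
    [Finite P] [Finite L] (q : ℕ) (horder : ProjectivePlane.order P L = q)
    (n k : ℕ) (hn : 1 ≤ n)
    (B : Set P) (hk : B.ncard = k)
    (harc : ∀ l : L, Set.ncard {x ∈ B | x ∈ l} ≤ n) :
    k ≤ (n - 1) * (q + 1) + 1 ∧
    (k = (n - 1) * (q + 1) + 1 → n ≤ q →
      n ∣ q ∧ ∀ l : L, Set.ncard {x ∈ B | x ∈ l} = 0 ∨ Set.ncard {x ∈ B | x ∈ l} = n) := by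
  classical
  cases nonempty_fintype P
  cases nonempty_fintype L
  have hNL : Nonempty L := by
    obtain ⟨-, -, -, l₁, -, -⟩ := @ProjectivePlane.exists_config P L _ _
    exact ⟨l₁⟩
  set Bf : Finset P := B.toFinset with hBf
  have hcard : ∀ l : L, Set.ncard {x ∈ B | x ∈ l} = (Bf.filter (· ∈ l)).card := by
    intro l
    have hset : {x ∈ B | x ∈ l} = ↑(Bf.filter (· ∈ l)) := by
      ext y; simp [hBf, Set.mem_toFinset]
    rw [hset, Set.ncard_coe_finset]
  have harc' : ∀ l : L, (Bf.filter (· ∈ l)).card ≤ n := fun l => (hcard l) ▸ harc l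
  have hBk : Bf.card = k := by rw [← hk, hBf, Set.ncard_eq_toFinset_card']
  -- number of lines through a point
  have hcardt : ∀ p : P, (Finset.univ.filter (fun l : L => p ∈ l)).card = q + 1 := by
    intro p
    have h1 := ProjectivePlane.lineCount_eq L p
    rw [horder] at h1
    rw [← h1]
    simp [Configuration.lineCount, Nat.card_eq_fintype_card, Fintype.card_subtype]
  -- key counting identity
  have key : ∀ p : P, (Bf.erase p).card =
      ∑ l ∈ Finset.univ.filter (fun l : L => p ∈ l), ((Bf.filter (· ∈ l)).erase p).card := by
    intro p
    set f : P → L := fun y => if h : p = y then Classical.arbitrary L else HasLines.mkLine h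
      with hf
    have hmem : ∀ y ∈ Bf.erase p, f y ∈ Finset.univ.filter (fun l : L => p ∈ l) := by
      intro y hy
      have hne : p ≠ y := fun h => (Finset.mem_erase.mp hy).1 h.symm
      simp only [Finset.mem_filter, Finset.mem_univ, true_and, hf, dif_neg hne]
      exact (HasLines.mkLine_ax hne).1
    rw [Finset.card_eq_sum_card_fiberwise hmem]
    refine Finset.sum_congr rfl fun l hl => ?_
    have hpl : p ∈ l := (Finset.mem_filter.mp hl).2
    congr 1
    ext y
    simp only [Finset.mem_filter, Finset.mem_erase]
    constructor
    · rintro ⟨⟨hyp, hyB⟩, hfy⟩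
      have hne : p ≠ y := fun h => hyp h.symm
      rw [hf] at hfy
      simp only [dif_neg hne] at hfy
      exact ⟨hyp, hyB, hfy ▸ (HasLines.mkLine_ax hne).2⟩
    · rintro ⟨hyp, hyB, hyl⟩
      have hne : p ≠ y := fun h => hyp h.symm
      refine ⟨⟨hyp, hyB⟩, ?_⟩
      rw [hf]
      simp only [dif_neg hne]
      exact ((Nondegenerate.eq_or_eq hpl hyl (HasLines.mkLine_ax hne).1
        (HasLines.mkLine_ax hne).2).resolve_left hne).symm
  -- fibers through a point of B have cardinality ≤ n - 1
  have hfib : ∀ x ∈ Bf, ∀ l : L, x ∈ l → ((Bf.filter (· ∈ l)).erase x).card ≤ n - 1 := by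
    intro x hx l hxl
    have hxf : x ∈ Bf.filter (· ∈ l) := Finset.mem_filter.mpr ⟨hx, hxl⟩
    rw [Finset.card_erase_of_mem hxf]
    exact Nat.sub_le_sub_right (harc' l) 1
  -- the bound, for nonempty B
  have hbound : ∀ x ∈ Bf, Bf.card ≤ (n - 1) * (q + 1) + 1 := by
    intro x hx
    have h1 : (Bf.erase x).card ≤ (n - 1) * (q + 1) := by
      rw [key x]
      calc ∑ l ∈ Finset.univ.filter (fun l : L => x ∈ l), ((Bf.filter (· ∈ l)).erase x).card
          ≤ ∑ l ∈ Finset.univ.filter (fun l : L => x ∈ l), (n - 1) :=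
            Finset.sum_le_sum fun l hl => hfib x hx l (Finset.mem_filter.mp hl).2
        _ = (n - 1) * (q + 1) := by
            rw [Finset.sum_const, hcardt x, smul_eq_mul, Nat.mul_comm]
    have h2 := Finset.card_erase_add_one hx
    omega
  constructor
  · rcases Bf.eq_empty_or_nonempty with h | ⟨x, hx⟩
    · have : Bf.card = 0 := by rw [h]; rfl
      omega
    · rw [← hBk]; exact hbound x hx
  · intro heq hnq
    -- B is nonempty
    have hkpos : 1 ≤ k := by omega
    have hBne : Bf.Nonempty := Finset.card_pos.mp (by omega)
    -- every line through a point of B meets B in exactly n points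
    have hexact : ∀ x ∈ Bf, ∀ l : L, x ∈ l → (Bf.filter (· ∈ l)).card = n := by
      intro x hx l hxl
      have hsum : ∑ l ∈ Finset.univ.filter (fun l : L => x ∈ l),
          ((Bf.filter (· ∈ l)).erase x).card = (n - 1) * (q + 1) := by
        have h2 := Finset.card_erase_add_one hx
        rw [← key x]; omega
      have hall : ∀ m ∈ Finset.univ.filter (fun l : L => x ∈ l),
          ((Bf.filter (· ∈ m)).erase x).card = n - 1 := by
        by_contra hcon
        push_neg at hcon
        obtain ⟨m, hm, hmne⟩ := hcon
        have hlt : ((Bf.filter (· ∈ m)).erase x).card < n - 1 :=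
          lt_of_le_of_ne (hfib x hx m (Finset.mem_filter.mp hm).2) hmne
        have : ∑ l ∈ Finset.univ.filter (fun l : L => x ∈ l),
            ((Bf.filter (· ∈ l)).erase x).card <
            ∑ l ∈ Finset.univ.filter (fun l : L => x ∈ l), (n - 1) :=
          Finset.sum_lt_sum (fun l hl => hfib x hx l (Finset.mem_filter.mp hl).2) ⟨m, hm, hlt⟩
        rw [Finset.sum_const, hcardt x, smul_eq_mul, Nat.mul_comm] at this
        omega
      have hl' : l ∈ Finset.univ.filter (fun l : L => x ∈ l) :=
        Finset.mem_filter.mpr ⟨Finset.mem_univ l, hxl⟩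
      have h3 := hall l hl'
      have hxf : x ∈ Bf.filter (· ∈ l) := Finset.mem_filter.mpr ⟨hx, hxl⟩
      rw [Finset.card_erase_of_mem hxf] at h3
      have h4 : 1 ≤ (Bf.filter (· ∈ l)).card := Finset.card_pos.mpr ⟨x, hxf⟩
      omega
    -- zero or n
    have hzn : ∀ l : L, (Bf.filter (· ∈ l)).card = 0 ∨ (Bf.filter (· ∈ l)).card = n := by
      intro l
      rcases (Bf.filter (· ∈ l)).eq_empty_or_nonempty with h | ⟨x, hx⟩
      · left; rw [h]; rfl
      · right
        obtain ⟨hxB, hxl⟩ := Finset.mem_filter.mp hx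
        exact hexact x hxB l hxl
    refine ⟨?_, fun l => by rw [hcard l]; exact hzn l⟩
    -- there is a point outside B
    have hcardP : Fintype.card P = q ^ 2 + q + 1 := by
      rw [ProjectivePlane.card_points P L, horder]
    have hklt : Bf.card < Fintype.card P := by
      have : (n - 1) * (q + 1) + 1 ≤ (q - 1) * (q + 1) + 1 :=
        Nat.add_le_add_right (Nat.mul_le_mul_right _ (by omega)) 1
      have hq : (q - 1) * (q + 1) + 1 ≤ q ^ 2 := by
        have h1 : 1 ≤ q := le_trans hn hnq
        nlinarith [Nat.sub_add_cancel h1]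
      omega
    have : Bf ≠ Finset.univ := fun h => by
      rw [h, Finset.card_univ] at hklt; omega
    obtain ⟨y, hy⟩ : ∃ y, y ∉ Bf := by
      by_contra hcon
      push_neg at hcon
      exact this (Finset.eq_univ_iff_forall.mpr hcon)
    -- count B via lines through y
    have herase : Bf.erase y = Bf := Finset.erase_eq_of_notMem hy
    have hky : k = ∑ l ∈ Finset.univ.filter (fun l : L => y ∈ l),
        ((Bf.filter (· ∈ l)).erase y).card := by
      have h5 := key y
      rw [herase] at h5
      rw [← hBk, h5]
    have hdvd : n ∣ k := by
      rw [hky]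
      refine Finset.dvd_sum fun l hl => ?_
      have : (Bf.filter (· ∈ l)).erase y = Bf.filter (· ∈ l) :=
        Finset.erase_eq_of_notMem fun h => hy (Finset.mem_filter.mp h).1
      rw [this]
      rcases hzn l with h | h <;> simp [h]
    have hnk : k + q = n * (q + 1) := by
      obtain ⟨m, rfl⟩ : ∃ m, n = m + 1 := ⟨n - 1, by omega⟩
      simp only [Nat.add_sub_cancel] at heq
      rw [heq]; ring
    have : n ∣ n * (q + 1) - k := Nat.dvd_sub ⟨q + 1, rfl⟩ hdvd
    have hq : q = n * (q + 1) - k := by omega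
    rw [hq]
    exact this
end

section
/- Let B be a blocking set in a finite projective plane of order q ≥ 2 that does not contain all the points of any line. Then |B| ≥ q + √q + 1 (as real numbers). Moreover, if |B| = q + √q + 1, then q is a perfect square, say q = m^2, and every line of the plane meets B in either 1 or m + 1 points (i.e., B is a Baer subplane). -/
open Configuration

/-!
Write `k = |B|` and `t l = |B ∩ l|`. If `x ∈ l \ B`, the `q` other lines through `x` are blocked
by `q` distinct points of `B` off `l`, so `1 ≤ t l ≤ k - q`. Counting incidences and ordered pairs
of distinct points of `B` gives `∑ t l = k (q + 1)` and `∑ t l (t l - 1) = k (k - 1)`; with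
`q² + q + 1` lines this yields `∑ (t l - 1) (k - q - t l) = q ((k - q - 1)² - q)`. The summands
are nonnegative, so `k - q - 1 ≥ √q`, and in case of equality every summand vanishes, i.e.
`t l ∈ {1, k - q}`.
-/

namespace Configuration

open Finset

variable {P L : Type*} [Membership P L]

open scoped Classical

lemma one_le_card_filter_mem {B : Finset P} (hblock : ∀ m : L, ∃ y ∈ B, y ∈ m) (l : L) :
    1 ≤ #{x ∈ B | x ∈ l} :=
  let ⟨y, hyB, hyl⟩ := hblock l
  card_pos.mpr ⟨y, mem_filter.mpr ⟨hyB, hyl⟩⟩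

variable [Fintype L]

lemma HasLines.sum_card_offDiag_filter_mem [HasLines P L] (B : Finset P) :
    ∑ l : L, #{x ∈ B | x ∈ l}.offDiag = #B.offDiag := by
  have hcount := sum_card_bipartiteAbove_eq_sum_card_bipartiteBelow
    (fun (l : L) (p : P × P) => p.1 ∈ l ∧ p.2 ∈ l) (s := univ) (t := B.offDiag)
  have hpairs : ∀ l : L, B.offDiag.bipartiteAbove (fun l p => p.1 ∈ l ∧ p.2 ∈ l) l =
      {x ∈ B | x ∈ l}.offDiag := by
    intro l
    ext p
    simp only [bipartiteAbove, mem_filter, mem_offDiag]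
    tauto
  have hunique : ∀ p ∈ B.offDiag,
      #(univ.bipartiteBelow (fun (l : L) (p : P × P) => p.1 ∈ l ∧ p.2 ∈ l) p) = 1 := by
    intro p hp
    obtain ⟨l, hl, hu⟩ := existsUnique_line P L p.1 p.2 (mem_offDiag.mp hp).2.2
    exact card_eq_one.mpr ⟨l, by ext m; simpa [bipartiteBelow] using ⟨hu m, fun h => h ▸ hl⟩⟩
  rw [sum_congr rfl fun l _ => congrArg card (hpairs l), sum_congr rfl hunique] at hcount
  simpa using hcount

namespace ProjectivePlane

variable [ProjectivePlane P L] [Finite P]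

lemma card_filter_mem_lines (x : P) : #{m : L | x ∈ m} = order P L + 1 := by
  rw [← lineCount_eq L x, lineCount, Nat.card_eq_fintype_card, Fintype.card_subtype]

lemma sum_card_filter_mem (B : Finset P) :
    ∑ l : L, #{x ∈ B | x ∈ l} = #B * (order P L + 1) := by
  have hcount := sum_card_bipartiteAbove_eq_sum_card_bipartiteBelow
    (fun (l : L) (x : P) => x ∈ l) (s := univ) (t := B)
  simpa only [bipartiteAbove, bipartiteBelow, card_filter_mem_lines, sum_const, smul_eq_mul]
    using hcount

lemma sum_sub_one_mul_card_sub_order_sub (B : Finset P) :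
    ∑ l : L, ((#{x ∈ B | x ∈ l} : ℤ) - 1) * (#B - order P L - #{x ∈ B | x ∈ l}) =
      order P L * ((#B - order P L - 1) ^ 2 - order P L) := by
  have hsum : ∑ l : L, (#{x ∈ B | x ∈ l} : ℤ) = #B * (order P L + 1) := by
    exact_mod_cast sum_card_filter_mem (L := L) B
  have hpairs : ∑ l : L, ((#{x ∈ B | x ∈ l} : ℤ) * #{x ∈ B | x ∈ l} - #{x ∈ B | x ∈ l}) =
      #B * #B - #B := by
    have := congrArg (Nat.cast : ℕ → ℤ) (HasLines.sum_card_offDiag_filter_mem (L := L) B)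
    simpa only [Nat.cast_sum, offDiag_card, Nat.cast_sub (Nat.le_mul_self _), Nat.cast_mul]
      using this
  have hlines : (Fintype.card L : ℤ) = order P L ^ 2 + order P L + 1 := by
    exact_mod_cast card_lines P L
  calc ∑ l : L, ((#{x ∈ B | x ∈ l} : ℤ) - 1) * (#B - order P L - #{x ∈ B | x ∈ l})
      = ∑ l : L, ((#B - order P L) * (#{x ∈ B | x ∈ l} : ℤ) -
          ((#{x ∈ B | x ∈ l} : ℤ) * #{x ∈ B | x ∈ l} - #{x ∈ B | x ∈ l}) -
          (#B - order P L)) :=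
        sum_congr rfl fun l _ => by ring
    _ = _ := by
        rw [sum_sub_distrib, sum_sub_distrib, ← mul_sum, hsum, hpairs, sum_const, card_univ,
          nsmul_eq_mul, hlines]
        ring

lemma card_filter_mem_add_order_le_card {B : Finset P} (hblock : ∀ m : L, ∃ y ∈ B, y ∈ m)
    {l : L} {x : P} (hxl : x ∈ l) (hxB : x ∉ B) : #{y ∈ B | y ∈ l} + order P L ≤ #B := by
  choose g hgB hgm using hblock
  set T : Finset L := ({m : L | x ∈ m} : Finset L).erase l
  have hT : #T = order P L := by
    rw [card_erase_of_mem (by simpa using hxl), card_filter_mem_lines]; rfl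
  have hxT : ∀ m ∈ T, x ∈ m := fun m hm => (mem_filter.mp (mem_of_mem_erase hm)).2
  have hline_eq : ∀ m ∈ T, ∀ m', x ∈ m' → g m ∈ m' → m = m' := fun m hm m' hxm' hgm' =>
    (Nondegenerate.eq_or_eq (hgm m) (hxT m hm) hgm' hxm').resolve_left fun h => hxB (h ▸ hgB m)
  have hdisj : Disjoint {y ∈ B | y ∈ l} (T.image g) := by
    simp only [disjoint_right, mem_image, mem_filter]
    rintro _ ⟨m, hm, rfl⟩ ⟨-, hgl⟩
    exact ne_of_mem_erase hm (hline_eq m hm l hxl hgl)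
  have hinj : Set.InjOn g T := fun m hm m' hm' h => hline_eq m hm m' (hxT m' hm') (h ▸ hgm m')
  calc #{y ∈ B | y ∈ l} + order P L = #({y ∈ B | y ∈ l} ∪ T.image g) := by
        rw [card_union_of_disjoint hdisj, card_image_of_injOn hinj, hT]
    _ ≤ #B := card_le_card <| union_subset (filter_subset _ _) <| by
        simp only [subset_iff, mem_image]
        rintro _ ⟨m, -, rfl⟩
        exact hgB m

variable {B : Finset P}

lemma sub_one_mul_card_sub_order_sub_nonneg (hblock : ∀ m : L, ∃ y ∈ B, y ∈ m)
    (hnoline : ∀ m : L, ∃ y, y ∈ m ∧ y ∉ B) (l : L) :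
    0 ≤ ((#{x ∈ B | x ∈ l} : ℤ) - 1) * (#B - order P L - #{x ∈ B | x ∈ l}) := by
  obtain ⟨x, hxl, hxB⟩ := hnoline l
  have hpos := one_le_card_filter_mem hblock l
  have hle := card_filter_mem_add_order_le_card hblock hxl hxB
  apply mul_nonneg <;> omega

lemma order_add_one_le_card (hblock : ∀ m : L, ∃ y ∈ B, y ∈ m)
    (hnoline : ∀ m : L, ∃ y, y ∈ m ∧ y ∉ B) : order P L + 1 ≤ #B := by
  obtain ⟨l⟩ : Nonempty L := Fintype.card_pos_iff.mp (by rw [card_lines P L]; positivity)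
  obtain ⟨x, hxl, hxB⟩ := hnoline l
  have hpos := one_le_card_filter_mem hblock l
  have hle := card_filter_mem_add_order_le_card hblock hxl hxB
  omega

lemma order_le_sq_of_card_eq {r : ℕ} (hblock : ∀ m : L, ∃ y ∈ B, y ∈ m)
    (hnoline : ∀ m : L, ∃ y, y ∈ m ∧ y ∉ B) (hcard : #B = order P L + 1 + r) :
    order P L ≤ r ^ 2 := by
  have hpos : (0 : ℤ) < order P L := by exact_mod_cast (one_lt_order P L).trans' one_pos
  have hnonneg := sum_nonneg fun l (_ : l ∈ univ) =>
    sub_one_mul_card_sub_order_sub_nonneg hblock hnoline l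
  rw [sum_sub_one_mul_card_sub_order_sub, hcard] at hnonneg
  push_cast at hnonneg
  zify
  nlinarith

lemma card_filter_mem_eq_one_or_eq_add_one {r : ℕ} (hblock : ∀ m : L, ∃ y ∈ B, y ∈ m)
    (hnoline : ∀ m : L, ∃ y, y ∈ m ∧ y ∉ B) (hcard : #B = order P L + 1 + r)
    (hsq : r ^ 2 = order P L) (l : L) : #{x ∈ B | x ∈ l} = 1 ∨ #{x ∈ B | x ∈ l} = r + 1 := by
  have hzero :
      ∑ l : L, ((#{x ∈ B | x ∈ l} : ℤ) - 1) * (#B - order P L - #{x ∈ B | x ∈ l}) = 0 := by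
    rw [sum_sub_one_mul_card_sub_order_sub, hcard, ← hsq]
    push_cast
    ring
  have hl := (sum_eq_zero_iff_of_nonneg fun l _ =>
    sub_one_mul_card_sub_order_sub_nonneg hblock hnoline l).mp hzero l (mem_univ l)
  rcases mul_eq_zero.mp hl with h | h
  · left; omega
  · right; omega

end ProjectivePlane

end Configuration

theorem bruen_blocking_set_general (P L : Type) [Membership P L] [ProjectivePlane P L]
    [Finite P] [Finite L] (q : ℕ) (horder : ProjectivePlane.order P L = q)
    (B : Set P)
    (hblock : ∀ l : L, ∃ x ∈ B, x ∈ l)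
    (hnoline : ∀ l : L, ∃ x : P, x ∈ l ∧ x ∉ B) :
    (B.ncard : ℝ) ≥ q + Real.sqrt q + 1 ∧
    ((B.ncard : ℝ) = q + Real.sqrt q + 1 →
      ∃ m : ℕ, q = m ^ 2 ∧
        ∀ l : L, Set.ncard {x ∈ B | x ∈ l} = 1 ∨ Set.ncard {x ∈ B | x ∈ l} = m + 1) := by
  classical
  have := Fintype.ofFinite L
  lift B to Finset P using B.toFinite
  subst horder
  obtain ⟨r, hr⟩ :=
    Nat.exists_eq_add_of_le (ProjectivePlane.order_add_one_le_card hblock hnoline)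
  have hsqrt : √(ProjectivePlane.order P L : ℝ) ≤ r := Real.sqrt_le_iff.mpr
    ⟨r.cast_nonneg, by exact_mod_cast ProjectivePlane.order_le_sq_of_card_eq hblock hnoline hr⟩
  rw [Set.ncard_coe_finset, hr]
  push_cast
  refine ⟨by linarith, fun heq => ?_⟩
  have hsq : r ^ 2 = ProjectivePlane.order P L := by
    have hr' : (r : ℝ) = √(ProjectivePlane.order P L : ℝ) := by linarith
    have hsq : (r : ℝ) ^ 2 = ProjectivePlane.order P L := by
      rw [hr', Real.sq_sqrt (Nat.cast_nonneg _)]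
    exact_mod_cast hsq
  refine ⟨r, hsq.symm, fun l => ?_⟩
  have hline := ProjectivePlane.card_filter_mem_eq_one_or_eq_add_one hblock hnoline hr hsq l
  rw [← Set.ncard_coe_finset, Finset.coe_filter] at hline
  simpa only [Finset.mem_coe] using hline

/-- Bruen's theorem: a non-trivial blocking set in a projective plane of order `q` has
at least `q + √q + 1` points; in case of equality `q` is a square and the blocking set
is a Baer subplane. -/
theorem bruen_blocking_set (P L : Type) [Membership P L] [ProjectivePlane P L]
    [Finite P] [Finite L] (q : ℕ) (hq : 2 ≤ q) (horder : ProjectivePlane.order P L = q)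
    (B : Set P)
    (hblock : ∀ l : L, ∃ x ∈ B, x ∈ l)
    (hnoline : ∀ l : L, ∃ x : P, x ∈ l ∧ x ∉ B) :
    (B.ncard : ℝ) ≥ q + Real.sqrt q + 1 ∧
    ((B.ncard : ℝ) = q + Real.sqrt q + 1 →
      ∃ m : ℕ, q = m ^ 2 ∧
        ∀ l : L, Set.ncard {x ∈ B | x ∈ l} = 1 ∨ Set.ncard {x ∈ B | x ∈ l} = m + 1) :=
  bruen_blocking_set_general P L q horder B hblock hnoline
end

section
/- Let p be a prime and let f : GF(p) → GF(p) be a nonlinear function. Then f determines at least (p+3)/2 directions, i.e., 2·|D_f| ≥ p + 3. -/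
/-!
Rédei's polynomial method. For a slope `m` put `h_m = ∏ₓ (X - (x m - f x))`. If `m` is not a
direction, `x ↦ x m - f x` is a bijection of `GF(p)` and `h_m = X^p - X`. For `2 ≤ k < p` the
coefficient of `X^k` in `h_m` is a polynomial in `m` of degree `< p - k`, because its top term is
the coefficient of `X^k` in `∏ₓ (X - x) = X^p - X`; vanishing at the `p - d` non-directions, it
vanishes identically once `k ≥ d`. So for a direction `m`, `h_m = X^p + g` with `deg g < d`.
All roots of `h_m` lie in `GF(p)`, hence `h_m ∣ (X^p - X) h_m' = (X^p - X) g'`, i.e.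
`h_m ∣ (g + X) g'`. Here `g + X ≠ 0` since `h_m` has a repeated root, and `g' ≠ 0` since `f` is
not linear and `deg g < p`. Comparing degrees gives `p ≤ (d - 1) + (d - 2)`.
-/

open Polynomial Function

namespace Polynomial

variable {R : Type*} [CommRing R]

theorem natDegree_esymm_le_of_natDegree_le_one {t : Multiset R[X]}
    (ht : ∀ q ∈ t, q.natDegree ≤ 1) (j : ℕ) : (t.esymm j).natDegree ≤ j := by
  refine Multiset.sum_induction (fun q : R[X] => q.natDegree ≤ j) _
    (fun _ _ ha hb => natDegree_add_le_of_degree_le ha hb) (by simp) fun q hq => ?_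
  obtain ⟨s, hs, rfl⟩ := Multiset.mem_map.1 hq
  rw [Multiset.mem_powersetCard] at hs
  refine (natDegree_multiset_prod_le _).trans ?_
  simpa [hs.2] using Multiset.sum_le_card_nsmul (s.map natDegree) 1
    (by simpa using fun q hq => ht q (Multiset.mem_of_le hs.1 hq))

theorem coeff_esymm_of_natDegree_le_one {t : Multiset R[X]}
    (ht : ∀ q ∈ t, q.natDegree ≤ 1) (j : ℕ) :
    (t.esymm j).coeff j = (t.map (coeff · 1)).esymm j := by
  simp only [Multiset.esymm, Multiset.powersetCard_map, Multiset.map_map]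
  rw [← lcoeff_apply, map_multiset_sum, Multiset.map_map]
  refine congrArg Multiset.sum (Multiset.map_congr rfl fun s hs => ?_)
  rw [Multiset.mem_powersetCard] at hs
  simpa [hs.2] using coeff_multiset_prod_of_natDegree_le s 1
    fun q hq => ht q (Multiset.mem_of_le hs.1 hq)

theorem natDegree_eq_zero_of_derivative_eq_zero_of_natDegree_lt {p : ℕ} [CharP R p]
    [NoZeroDivisors R] (hp : p ≠ 0) {f : R[X]} (hf : derivative f = 0)
    (hlt : f.natDegree < p) : f.natDegree = 0 := by
  rw [← expand_contract p hf hp, natDegree_expand] at hlt ⊢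
  rw [Nat.lt_one_iff.1 (Nat.lt_of_mul_lt_mul_right (hlt.trans_eq (one_mul p).symm)), zero_mul]

theorem Monic.natDegree_sub_X_pow_natDegree_lt {h : R[X]} (hm : h.Monic) {e : ℕ} (he : 0 < e)
    (hcoeff : ∀ k, e ≤ k → k < h.natDegree → h.coeff k = 0) :
    (h - X ^ h.natDegree).natDegree < e := by
  suffices (h - X ^ h.natDegree).natDegree ≤ e - 1 by omega
  refine natDegree_le_iff_coeff_eq_zero.2 fun k hk => ?_
  rw [coeff_sub, coeff_X_pow]
  rcases lt_trichotomy k h.natDegree with hlt | rfl | hgt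
  · simp [hcoeff k (by omega) hlt, hlt.ne]
  · simp [hm.coeff_natDegree]
  · simp [coeff_eq_zero_of_natDegree_lt hgt, hgt.ne']

theorem coeff_X_pow_sub_X_eq_zero {n k : ℕ} (hk1 : 1 < k) (hkn : k < n) :
    (X ^ n - X : R[X]).coeff k = 0 := by
  simp [coeff_X, hkn.ne, hk1.ne]

theorem prod_X_sub_C_comp_eq_multiset_prod {ι : Type*} (s : Finset ι) (φ : ι → R) :
    ∏ i ∈ s, (X - C (φ i)) = ((s.val.map φ).map (X - C ·)).prod := by
  rw [Multiset.map_map]; rfl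

end Polynomial

theorem Multiset.prod_X_sub_C_dvd_mul_derivative {K : Type*} [Field K] [DecidableEq K]
    (s : Multiset K) :
    (s.map (X - C ·)).prod ∣
      (∏ a ∈ s.toFinset, (X - C a)) * derivative (s.map (X - C ·)).prod := by
  have hcount : (s.map (X - C ·)).prod = ∏ a ∈ s.toFinset, (X - C a) ^ s.count a :=
    Finset.prod_multiset_map_count s _
  have hlower :
      ∏ a ∈ s.toFinset, (X - C a) ^ (s.count a - 1) ∣ derivative (s.map (X - C ·)).prod :=
    Finset.prod_dvd_of_coprime
      (fun a _ b _ hab => (pairwise_coprime_X_sub_C injective_id hab).pow)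
      fun a ha => pow_sub_one_dvd_derivative_of_pow_dvd
        (hcount ▸ Finset.dvd_prod_of_mem _ ha)
  calc (s.map (X - C ·)).prod
      = (∏ a ∈ s.toFinset, (X - C a)) * ∏ a ∈ s.toFinset, (X - C a) ^ (s.count a - 1) := by
        rw [hcount, ← Finset.prod_mul_distrib]
        refine Finset.prod_congr rfl fun a ha => ?_
        rw [← pow_succ', Nat.sub_add_cancel
          (Multiset.one_le_count_iff_mem.2 (Multiset.mem_toFinset.1 ha))]
    _ ∣ _ := mul_dvd_mul_left _ hlower

namespace FiniteField

variable {F : Type*} [Field F] [Fintype F]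

theorem prod_X_sub_C_eq_X_pow_card_sub_X : ∏ a : F, (X - C a) = X ^ Fintype.card F - X := by
  have hcard : 1 < Fintype.card F := Fintype.one_lt_card
  have hmonic : (X ^ Fintype.card F - X : F[X]).Monic :=
    monic_X_pow_sub (by rw [degree_X]; exact_mod_cast hcard)
  have := prod_multiset_X_sub_C_of_monic_of_roots_card_eq hmonic
    (by rw [roots_X_pow_card_sub_X, X_pow_card_sub_X_natDegree_eq F hcard]; rfl)
  rwa [roots_X_pow_card_sub_X] at this

theorem prod_X_sub_C_comp_eq_X_pow_card_sub_X_iff {φ : F → F} :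
    ∏ x, (X - C (φ x)) = X ^ Fintype.card F - X ↔ Injective φ := by
  refine ⟨fun h => ?_, fun h => ?_⟩
  · have hroots := congrArg roots h
    rw [← prod_X_sub_C_eq_X_pow_card_sub_X, prod_X_sub_C_comp_eq_multiset_prod,
      roots_multiset_prod_X_sub_C, roots_prod_X_sub_C] at hroots
    exact fun x y hxy => (Multiset.nodup_map_iff_inj_on Finset.univ.nodup).1
      (hroots.symm ▸ Finset.univ.nodup) x (Finset.mem_univ x) y (Finset.mem_univ y) hxy
  · rw [← prod_X_sub_C_eq_X_pow_card_sub_X]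
    exact Fintype.prod_bijective φ (Finite.injective_iff_bijective.1 h) _ _ fun _ => rfl

theorem prod_X_sub_C_comp_dvd_X_pow_card_sub_X_mul_derivative (φ : F → F) :
    ∏ x, (X - C (φ x)) ∣ (X ^ Fintype.card F - X) * derivative (∏ x, (X - C (φ x))) := by
  classical
  rw [prod_X_sub_C_comp_eq_multiset_prod]
  refine (Multiset.prod_X_sub_C_dvd_mul_derivative _).trans (mul_dvd_mul_right ?_ _)
  rw [← prod_X_sub_C_eq_X_pow_card_sub_X]
  exact Finset.prod_dvd_prod_of_subset _ _ _ (Finset.subset_univ _)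

theorem derivative_X_pow_card : derivative (X ^ Fintype.card F : F[X]) = 0 := by
  simp [derivative_X_pow]

theorem natDegree_prod_X_sub_C_comp_sub_X_pow_card_lt (φ : F → F) {e : ℕ} (he : 0 < e)
    (hcoeff : ∀ k, e ≤ k → k < Fintype.card F → (∏ x, (X - C (φ x))).coeff k = 0) :
    (∏ x, (X - C (φ x)) - X ^ Fintype.card F).natDegree < e := by
  have hdeg : (∏ x, (X - C (φ x))).natDegree = Fintype.card F := by simp
  rw [← hdeg] at hcoeff ⊢
  exact (monic_prod_of_monic _ _ fun x _ => monic_X_sub_C (φ x)).natDegree_sub_X_pow_natDegree_lt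
    he hcoeff

theorem exists_eq_const_of_derivative_prod_X_sub_C_comp_eq_zero
    (hq : (Fintype.card F).Prime) {φ : F → F} (h0 : derivative (∏ x, (X - C (φ x))) = 0) :
    ∃ c, ∀ x, φ x = c := by
  set g := ∏ x, (X - C (φ x)) - X ^ Fintype.card F
  have := Fact.mk hq
  have := charP_of_card_eq_prime (R := F) (p := Fintype.card F) rfl
  have hg : g.natDegree = 0 :=
    natDegree_eq_zero_of_derivative_eq_zero_of_natDegree_lt hq.ne_zero
      (by simp [g, h0, derivative_X_pow_card]) (natDegree_prod_X_sub_C_comp_sub_X_pow_card_lt φ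
        Fintype.card_pos fun k hk hk' => (hk'.not_ge hk).elim)
  refine ⟨-g.coeff 0, fun x => ?_⟩
  have hroot : (∏ x, (X - C (φ x))).eval (φ x) = 0 := by
    rw [eval_prod]; exact Finset.prod_eq_zero (Finset.mem_univ x) (by simp)
  have : (X ^ Fintype.card F + C (g.coeff 0)).eval (φ x) = 0 := by
    rwa [← eq_C_of_natDegree_eq_zero hg, add_sub_cancel]
  rw [eval_add, eval_pow, eval_X, eval_C, pow_card] at this
  linear_combination this

theorem card_add_three_le_two_mul_of_coeff_eq_zero (hq : (Fintype.card F).Prime) {φ : F → F}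
    (hinj : ¬ Injective φ) (hconst : ¬ ∃ c, ∀ x, φ x = c) {e : ℕ} (he : 2 ≤ e)
    (hcoeff : ∀ k, e ≤ k → k < Fintype.card F → (∏ x, (X - C (φ x))).coeff k = 0) :
    Fintype.card F + 3 ≤ 2 * e := by
  set h := ∏ x, (X - C (φ x))
  set g := h - X ^ Fintype.card F
  have hderiv : derivative h = derivative g := by simp [g, derivative_X_pow_card]
  have hdvd : h ∣ (g + X) * derivative g := by
    -- `X ^ q - X = h - (g + X)`, so modulo `h` the factor `X ^ q - X` becomes `-(g + X)`.
    have := prod_X_sub_C_comp_dvd_X_pow_card_sub_X_mul_derivative φ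
    rw [show (g + X) * derivative g = h * derivative g - (X ^ Fintype.card F - X) * derivative h by
      rw [hderiv]; ring]
    exact dvd_sub (dvd_mul_right _ _) this
  have hgX : g + X ≠ 0 := fun h0 =>
    hinj (prod_X_sub_C_comp_eq_X_pow_card_sub_X_iff.1 (by linear_combination h0))
  have hg' : derivative g ≠ 0 := fun h0 =>
    hconst (exists_eq_const_of_derivative_prod_X_sub_C_comp_eq_zero hq (hderiv ▸ h0))
  have hg : g.natDegree < e := natDegree_prod_X_sub_C_comp_sub_X_pow_card_lt φ (by omega) hcoeff
  have hgX_deg : (g + X).natDegree ≤ e - 1 := by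
    have := natDegree_add_le g X
    rw [natDegree_X] at this
    omega
  have hg'_deg : (derivative g).natDegree ≤ e - 2 := by
    have := natDegree_derivative_le g
    omega
  have : Fintype.card F ≤ (e - 1) + (e - 2) :=
    calc Fintype.card F = h.natDegree := by simp [h]
      _ ≤ ((g + X) * derivative g).natDegree := natDegree_le_of_dvd hdvd (mul_ne_zero hgX hg')
      _ = (g + X).natDegree + (derivative g).natDegree := natDegree_mul hgX hg'
      _ ≤ (e - 1) + (e - 2) := add_le_add hgX_deg hg'_deg
  omega

end FiniteField

section Directions

variable {F : Type*} [Field F] (f : F → F)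

def directions : Set F := {m | ∃ u v : F, u ≠ v ∧ m = (f u - f v) / (u - v)}

theorem mem_directions_iff {m : F} : m ∈ directions f ↔ ¬ Injective fun x => x * m - f x := by
  simp only [directions, Set.mem_ofPred_eq, Injective, not_forall]
  refine exists₂_congr fun u v => ⟨fun ⟨huv, hm⟩ => ⟨?_, huv⟩, fun ⟨heq, huv⟩ => ⟨huv, ?_⟩⟩
  · rw [hm]
    field_simp [sub_ne_zero.2 huv]
    ring
  · field_simp [sub_ne_zero.2 huv]
    linear_combination heq

end Directions

section Redei

variable {F : Type*} [Field F] [Fintype F] (f : F → F)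

/-- `∏ₓ (T - (x Y - f x))`, with `T` the outer and `Y` the inner variable. -/
noncomputable def redeiPoly : F[X][X] := ∏ x, (X - C (C x * X - C (f x)))

theorem map_evalRingHom_redeiPoly (m : F) :
    (redeiPoly f).map (evalRingHom m) = ∏ x, (X - C (x * m - f x)) := by
  simp [redeiPoly, Polynomial.map_prod]

theorem natDegree_le_one_of_mem_map_C_mul_X_sub_C :
    ∀ q ∈ Finset.univ.val.map (fun x => C x * X - C (f x)), q.natDegree ≤ 1 := by
  simp only [Multiset.mem_map]
  rintro _ ⟨x, -, rfl⟩
  compute_degree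

theorem coeff_redeiPoly {k : ℕ} (hk : k ≤ Fintype.card F) :
    (redeiPoly f).coeff k = C ((-1) ^ (Fintype.card F - k)) *
      (Finset.univ.val.map fun x => C x * X - C (f x)).esymm (Fintype.card F - k) := by
  rw [redeiPoly, prod_X_sub_C_comp_eq_multiset_prod,
    Multiset.prod_X_sub_C_coeff _ (by simpa using hk)]
  simp

/-- The top coefficient only sees the linear parts `x Y` of the factors, so it is the same as for
`∏ₓ (T - x) = T ^ q - T`. -/
theorem coeff_coeff_redeiPoly {k : ℕ} (hk : k ≤ Fintype.card F) :
    ((redeiPoly f).coeff k).coeff (Fintype.card F - k) =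
      (X ^ Fintype.card F - X : F[X]).coeff k := by
  rw [← FiniteField.prod_X_sub_C_eq_X_pow_card_sub_X, Finset.prod_eq_multiset_prod,
    Multiset.prod_X_sub_C_coeff _ (by simpa using hk), coeff_redeiPoly f hk,
    coeff_C_mul, coeff_esymm_of_natDegree_le_one, Multiset.map_map]
  · simp
  · exact natDegree_le_one_of_mem_map_C_mul_X_sub_C f

theorem natDegree_coeff_redeiPoly_lt {k : ℕ} (hk2 : 2 ≤ k) (hkq : k < Fintype.card F) :
    ((redeiPoly f).coeff k).natDegree < Fintype.card F - k := by
  have hle : ((redeiPoly f).coeff k).natDegree ≤ Fintype.card F - k := by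
    rw [coeff_redeiPoly f hkq.le]
    exact (natDegree_C_mul_le _ _).trans
      (natDegree_esymm_le_of_natDegree_le_one (natDegree_le_one_of_mem_map_C_mul_X_sub_C f) _)
  have htop : ((redeiPoly f).coeff k).coeff (Fintype.card F - k) = 0 := by
    rw [coeff_coeff_redeiPoly f hkq.le, coeff_X_pow_sub_X_eq_zero hk2 hkq]
  have := natDegree_le_pred hle htop
  omega

theorem coeff_redeiPoly_eq_zero {k : ℕ} (hk2 : 2 ≤ k) (hkd : (directions f).ncard ≤ k)
    (hkq : k < Fintype.card F) : (redeiPoly f).coeff k = 0 := by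
  classical
  refine eq_zero_of_natDegree_lt_card_of_eval_eq_zero' _ (directions f).toFinsetᶜ
    (fun m hm => ?_) ?_
  · have hinj : Injective fun x => x * m - f x := by
      simpa [mem_directions_iff] using hm
    rw [← coe_evalRingHom, ← coeff_map, map_evalRingHom_redeiPoly,
      FiniteField.prod_X_sub_C_comp_eq_X_pow_card_sub_X_iff.2 hinj,
      coeff_X_pow_sub_X_eq_zero hk2 hkq]
  · rw [Finset.card_compl, ← Set.ncard_eq_toFinset_card']
    have := natDegree_coeff_redeiPoly_lt f hk2 hkq
    omega

end Redei

/-- Rédei / Lovász–Schrijver: a nonlinear function `f : GF(p) → GF(p)`, `p` prime,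
determines at least `(p+3)/2` directions. -/
theorem directions_prime_case (p : ℕ) (hp : p.Prime)
    (F : Type) [Field F] [Fintype F] (hF : Fintype.card F = p)
    (f : F → F) (hnl : ¬∃ a b : F, ∀ x : F, f x = a * x + b) :
    2 * Set.ncard {m : F | ∃ u v : F, u ≠ v ∧ m = (f u - f v) / (u - v)} ≥ p + 3 := by
  change 2 * (directions f).ncard ≥ p + 3
  obtain ⟨m₀, hm₀⟩ : ∃ m, m ∈ directions f := ⟨_, 1, 0, one_ne_zero, rfl⟩
  have hconst : ¬ ∃ c, ∀ x, x * m₀ - f x = c := fun ⟨c, hc⟩ =>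
    hnl ⟨m₀, -c, fun x => by linear_combination -(hc x)⟩
  have := FiniteField.card_add_three_le_two_mul_of_coeff_eq_zero (hF ▸ hp)
    ((mem_directions_iff f).1 hm₀) hconst (le_max_left 2 _) fun k hk hkq => by
      rw [← map_evalRingHom_redeiPoly, coeff_map,
        coeff_redeiPoly_eq_zero f ((le_max_left _ _).trans hk) ((le_max_right _ _).trans hk) hkq,
        map_zero]
  have := hp.two_le
  omega
end

section
/- Let K ⊆ L be finite fields with |K| = q and [L : K] = s ≥ 1 (so |L| = q^s), and let W be a K-subspace of L^3 (viewed as a vector space over K) with dim_K W = s + 1. Then: (i) every 2-dimensional L-subspace of L^3 contains a nonzero vector of W (so the set B(W) of points of PG(2,q^s) whose corresponding 1-dimensional L-subspace contains a nonzero vector of W is a blocking set); and (ii) the number of 1-dimensional L-subspaces of L^3 containing a nonzero vector of W is at most (q^{s+1} − 1)/(q − 1). -/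
open Module

/-- Polito–Polverino construction: if `K ⊆ E` are finite fields with `|K| = q` and
`[E:K] = s`, and `W` is a `K`-subspace of `E³` of `K`-dimension `s+1`, then every line
of `PG(2,qˢ)` contains a point spanned by a nonzero vector of `W` (so `B(W)` is a
blocking set), and `B(W)` has at most `(q^(s+1) - 1)/(q - 1)` points. -/
theorem linear_blocking_set (K E : Type) [Field K] [Field E] [Algebra K E]
    [Fintype K] [Fintype E] (q s : ℕ) (hq : Fintype.card K = q)
    (hs : finrank K E = s) (hs1 : 1 ≤ s)
    (W : Submodule K (Fin 3 → E)) (hW : finrank K W = s + 1) :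
    (∀ M : Submodule E (Fin 3 → E), finrank E M = 2 →
      ∃ v : Fin 3 → E, v ∈ W ∧ v ≠ 0 ∧ v ∈ M) ∧
    Set.ncard {P : Submodule E (Fin 3 → E) | finrank E P = 1 ∧
        ∃ v : Fin 3 → E, v ∈ W ∧ v ≠ 0 ∧ v ∈ P} ≤ (q ^ (s + 1) - 1) / (q - 1) := by
  have htot : finrank K (Fin 3 → E) = s * 3 := by
    rw [← Module.finrank_mul_finrank K E (Fin 3 → E), hs]
    simp [Module.finrank_pi]
  constructor
  · intro M hM
    have hMK : finrank K (M.restrictScalars K) = s * 2 := by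
      have : finrank K E * finrank E M = finrank K M :=
        Module.finrank_mul_finrank K E M
      rw [hs, hM] at this
      exact this.symm
    have key := Submodule.finrank_sup_add_finrank_inf_eq W (M.restrictScalars K)
    have hle : finrank K ↥(W ⊔ M.restrictScalars K) ≤ s * 3 := htot ▸ Submodule.finrank_le _
    have hpos : 0 < finrank K ↥(W ⊓ M.restrictScalars K) := by
      rw [hW, hMK] at key; omega
    have hne : W ⊓ M.restrictScalars K ≠ ⊥ := by
      intro h
      rw [h, finrank_bot] at hpos
      exact lt_irrefl 0 hpos
    obtain ⟨v, hv, hv0⟩ := Submodule.exists_mem_ne_zero_of_ne_bot hne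
    exact ⟨v, hv.1, hv0, hv.2⟩
  · classical
    have hq2 : 2 ≤ q := hq ▸ Fintype.one_lt_card
    set S := {P : Submodule E (Fin 3 → E) | finrank E P = 1 ∧
        ∃ v : Fin 3 → E, v ∈ W ∧ v ≠ 0 ∧ v ∈ P} with hS
    let src : Finset ↥W := Finset.univ.filter (fun v => v ≠ 0)
    have hsrcmem : ∀ v : ↥W, v ∈ src ↔ v ≠ 0 := by
      intro v; simp [src]
    have hsrc : src.card = q ^ (s + 1) - 1 := by
      have hcardW : Fintype.card ↥W = q ^ (s + 1) := by
        rw [card_eq_pow_finrank (K := K) (V := ↥W), hq, hW]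
      have : src = Finset.univ.erase 0 := by
        ext v; simp [src, eq_comm]
      rw [this, Finset.card_erase_of_mem (Finset.mem_univ _), Finset.card_univ, hcardW]
    let f : ↥W → Submodule E (Fin 3 → E) := fun v => E ∙ (v : Fin 3 → E)
    let t : Finset (Submodule E (Fin 3 → E)) := src.image f
    have hsub : S ⊆ ↑t := by
      rintro P ⟨hP1, v, hvW, hv0, hvP⟩
      have hspan : (E ∙ v) = P := by
        apply Submodule.eq_of_le_of_finrank_eq
        · rwa [Submodule.span_singleton_le_iff_mem]
        · rw [finrank_span_singleton hv0, hP1]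
      have : (⟨v, hvW⟩ : ↥W) ∈ src := (hsrcmem _).mpr (by
        intro h; exact hv0 (by simpa using congrArg Subtype.val h))
      exact Finset.mem_coe.mpr (Finset.mem_image.mpr ⟨⟨v, hvW⟩, this, hspan⟩)
    have hfib : (q - 1) * t.card ≤ src.card := by
      apply Finset.mul_card_image_le_card src (q - 1)
      intro b hb
      obtain ⟨v₀, hv₀s, rfl⟩ := Finset.mem_image.mp hb
      have hv₀0 : v₀ ≠ 0 := (hsrcmem _).mp hv₀s
      have hinj : Function.Injective (fun c : Kˣ => (c : K) • v₀) := by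
        intro c c' h
        exact Units.ext (smul_left_injective K hv₀0 h)
      have hsubset : (Finset.univ : Finset Kˣ).image (fun c : Kˣ => (c : K) • v₀) ⊆
          {a ∈ src | f a = f v₀} := by
        intro a ha
        obtain ⟨c, _, rfl⟩ := Finset.mem_image.mp ha
        refine Finset.mem_filter.mpr ⟨(hsrcmem _).mpr ?_, ?_⟩
        · exact smul_ne_zero (Units.ne_zero c) hv₀0
        · show (E ∙ (((c : K) • v₀ : ↥W) : Fin 3 → E)) = E ∙ (v₀ : Fin 3 → E)
          have hc : ((((c : K) • v₀ : ↥W)) : Fin 3 → E)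
              = algebraMap K E (c : K) • (v₀ : Fin 3 → E) := by
            rw [Submodule.coe_smul, algebraMap_smul]
          rw [hc]
          exact Submodule.span_singleton_smul_eq
            (isUnit_iff_ne_zero.mpr (by
              simpa using (algebraMap K E).map_ne_zero.mpr (Units.ne_zero c))) _
      calc q - 1 = Fintype.card Kˣ := by rw [Fintype.card_units, hq]
        _ = ((Finset.univ : Finset Kˣ).image (fun c : Kˣ => (c : K) • v₀)).card := by
            rw [Finset.card_image_of_injective _ hinj, Finset.card_univ]
        _ ≤ _ := Finset.card_le_card hsubset
    have h1 : S.ncard ≤ t.card := by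
      rw [← Set.ncard_coe_finset]
      exact Set.ncard_le_ncard hsub t.finite_toSet
    have h2 : t.card ≤ (q ^ (s + 1) - 1) / (q - 1) := by
      rw [Nat.le_div_iff_mul_le (by omega : 0 < q - 1)]
      rw [mul_comm]
      rw [hsrc] at hfib
      exact hfib
    exact le_trans h1 h2
end
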